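/- For half-integer dominant weights λ, μ ∈ Λ⁺_{½+ℤ}, we have λ ≽ μ (Penkov–Serganova Bruhat order) if and only if λ♮ ⪰_a μ♮, where λ♮ = (λ♯)♭. -/

import Mathlib

/-- `γ_a` as an element of the free abelian group on `{γ_r : r ∈ ℤ}`. -/
def gam (a : ℤ) : ℤ → ℤ := fun r => if r = a then 1 else 0

/-- The positive cone for `gl_∞`: nonnegative integer combinations of `γ_r − γ_{r+1}`. -/
def GCone (v : ℤ → ℤ) : Prop :=
  ∃ c : ℤ →₀ ℕ, v = c.sum fun r k => k • (gam r - gam (r + 1))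

/-- We model `ℤ^{p|q}` (with `p + q = n`) as `Fin n → ℤ`, where index `i < p`
corresponds to the `J(p|q)`-index `i − p ∈ {−p,…,−1}` (sign `−1`) and index `i ≥ p`
corresponds to `i − p + 1 ∈ {1,…,q}` (sign `+1`).
`wt_s(f) = Σ_{s ≤ i} sgn(i) γ_{f(i)}`. -/
def wtsA {n : ℕ} (p : ℕ) (f : Fin n → ℤ) (s : Fin n) : ℤ → ℤ :=
  ∑ i ∈ Finset.univ.filter (fun i => s ≤ i),
    (if (i : ℕ) < p then -(gam (f i)) else gam (f i))

/-- The Bruhat ordering `⪰_a` on `ℤ^{p|q}`. -/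
def ASucceq {n : ℕ} (p : ℕ) (f g : Fin n → ℤ) : Prop :=
  (∑ i : Fin n, (if (i : ℕ) < p then -(gam (f i)) else gam (f i))) =
      (∑ i : Fin n, (if (i : ℕ) < p then -(gam (g i)) else gam (g i))) ∧
    ∀ s : Fin n, GCone (wtsA p f s - wtsA p g s)

/-- The map `♭ : λ ↦ (−λ₁,…,−λ_p | λ_{p+1},…,λ_n)`. -/
def flat {n : ℕ} (p : ℕ) (lam : Fin n → ℤ) : Fin n → ℤ :=
  fun i => if (i : ℕ) < p then -lam i else lam i

/-- Weakly decreasing rational vectors. -/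
def WkDec {n : ℕ} (v : Fin n → ℚ) : Prop := ∀ i j : Fin n, i ≤ j → v j ≤ v i

/-- One step of the Penkov-Serganova Bruhat order. -/
def PSStep {n : ℕ} (v w : Fin n → ℚ) : Prop :=
  WkDec v ∧ WkDec w ∧ ∃ i j : Fin n, i < j ∧ v i + v j = 0 ∧
    w = fun k => v k + (if k = i then 1 else 0) - (if k = j then 1 else 0)

/-- `PSLE μ λ` means `λ ≽ μ` in the Penkov-Serganova Bruhat order. -/
def PSLE {n : ℕ} (mu lam : Fin n → ℚ) : Prop :=
  WkDec mu ∧ WkDec lam ∧ Relation.ReflTransGen PSStep mu lam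

/-- Dominance for `q(n)`-weights. -/
def Dom {n : ℕ} (lam : Fin n → ℚ) : Prop :=
  ∀ i j : Fin n, i < j → lam j ≤ lam i ∧ (lam i = lam j → lam i = 0)

/-- The map `♯`, landing in integer vectors: `λ♯ᵢ = λᵢ + sgn(λᵢ)·½`. -/
def sharpInt {n : ℕ} (lam : Fin n → ℚ) : Fin n → ℤ :=
  fun i => ⌊lam i + (if 0 < lam i then (1 : ℚ) / 2 else -(1 / 2))⌋

/-- The number `p` of positive entries of `λ`. -/
def pc {n : ℕ} (lam : Fin n → ℚ) : ℕ :=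
  (Finset.univ.filter fun i : Fin n => 0 < lam i).card

/-- `λ♮ = (λ♯)♭`. -/
def naturalQ {n : ℕ} (lam : Fin n → ℚ) : Fin n → ℤ :=
  flat (pc lam) (sharpInt lam)
namespace PSAux
open Finset

/-- Half-integer vectors. -/
def HI {n : ℕ} (v : Fin n → ℚ) : Prop := ∀ i, ∃ k : ℤ, v i = (k : ℚ) + 1 / 2

theorem gcone_zero : GCone 0 := ⟨0, by simp [Finsupp.sum_zero_index]⟩

theorem gcone_gen (r : ℤ) : GCone (gam r - gam (r + 1)) := by
  refine ⟨Finsupp.single r 1, ?_⟩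
  rw [Finsupp.sum_single_index]
  · rw [one_smul]
  · rw [zero_smul]

theorem gcone_add {v w : ℤ → ℤ} (hv : GCone v) (hw : GCone w) : GCone (v + w) := by
  obtain ⟨c, rfl⟩ := hv
  obtain ⟨d, rfl⟩ := hw
  exact ⟨c + d, (Finsupp.sum_add_index (by simp) (by intro a _ b₁ b₂; rw [add_nsmul])).symm⟩

theorem gcone_trans {a b c : ℤ → ℤ} (h1 : GCone (a - b)) (h2 : GCone (b - c)) :
    GCone (a - c) := by
  have := gcone_add h1 h2
  simpa using this

/-- windowed prefix sum of a cone element is nonnegative. -/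
theorem gcone_window {v : ℤ → ℤ} (h : GCone v) (t : ℤ) :
    ∃ A ≤ t, ∀ B ≤ A, 0 ≤ ∑ r ∈ Finset.Icc B t, v r := by
  obtain ⟨c, rfl⟩ := h
  set A : ℤ := (insert t c.support).min' (insert_nonempty _ _) with hA
  have hAt : A ≤ t := min'_le _ _ (mem_insert_self _ _)
  refine ⟨A, hAt, fun B hB => ?_⟩
  have hg : ∀ a : ℤ, ∀ s : Finset ℤ, ∑ r ∈ s, gam a r = if a ∈ s then 1 else 0 := by
    intro a s
    simp only [gam]
    rw [Finset.sum_ite_eq' s a (fun _ => (1:ℤ))]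
  have key : ∀ r' ∈ c.support, (∑ r ∈ Finset.Icc B t, (c r' • (gam r' - gam (r' + 1))) r)
      = if r' = t then (c r' : ℤ) else 0 := by
    intro r' hr'
    have hBr' : B ≤ r' := hB.trans (min'_le _ _ (mem_insert_of_mem hr'))
    simp only [Pi.smul_apply, Pi.sub_apply, nsmul_eq_mul]
    rw [← Finset.mul_sum, Finset.sum_sub_distrib, hg, hg]
    by_cases h1 : r' ≤ t
    · by_cases h2 : r' = t
      · subst h2
        rw [if_pos (Finset.mem_Icc.mpr ⟨hBr', le_rfl⟩), if_neg (by
            intro hmem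
            exact absurd (Finset.mem_Icc.mp hmem).2 (by omega)), if_pos rfl]
        ring
      · rw [if_pos (Finset.mem_Icc.mpr ⟨hBr', h1⟩), if_pos (Finset.mem_Icc.mpr ⟨by omega, by omega⟩), if_neg h2]
        ring
    · rw [if_neg (by intro hmem; exact h1 (Finset.mem_Icc.mp hmem).2),
        if_neg (by intro hmem; exact h1 (by have := (Finset.mem_Icc.mp hmem).2; omega)),
        if_neg (by omega)]
      ring
  have expand : ∀ r : ℤ, (c.sum fun r' k => k • (gam r' - gam (r' + 1))) r
      = ∑ r' ∈ c.support, (c r' • (gam r' - gam (r' + 1))) r := by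
    intro r
    rw [Finsupp.sum, Finset.sum_apply]
  calc (0:ℤ) ≤ ∑ r' ∈ c.support, if r' = t then (c r' : ℤ) else 0 :=
        Finset.sum_nonneg fun r' _ => by positivity
    _ = ∑ r' ∈ c.support, ∑ r ∈ Finset.Icc B t, (c r' • (gam r' - gam (r' + 1))) r :=
        (Finset.sum_congr rfl fun r' hr' => (key r' hr').symm)
    _ = ∑ r ∈ Finset.Icc B t, (c.sum fun r' k => k • (gam r' - gam (r' + 1))) r := by
        rw [Finset.sum_comm]
        exact Finset.sum_congr rfl fun r _ => (expand r).symm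
variable {n : ℕ}

/-- multiplicity of value `b` in `v`. -/
def mval (v : Fin n → ℚ) (b : ℚ) : ℕ := (Finset.univ.filter fun i => v i = b).card

theorem card_filter_eq_sum (v : Fin n → ℚ) (P : ℚ → Prop) [DecidablePred P] (U : Finset ℚ)
    (hU : ∀ i, P (v i) → v i ∈ U) :
    (Finset.univ.filter fun i => P (v i)).card = ∑ b ∈ U.filter P, mval v b := by
  rw [Finset.card_eq_sum_card_fiberwise (f := v) (t := U.filter P)
    (fun i hi => Finset.mem_filter.mpr ⟨hU i (Finset.mem_filter.mp hi).2, (Finset.mem_filter.mp hi).2⟩)]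
  refine Finset.sum_congr rfl fun b hb => ?_
  have hPb : P b := (Finset.mem_filter.mp hb).2
  unfold mval
  congr 1
  ext i
  simp only [Finset.mem_filter, Finset.mem_univ, true_and]
  exact ⟨fun h => h.2, fun h => ⟨h ▸ hPb, h⟩⟩

theorem count_le_count (v w : Fin n → ℚ) (P : ℚ → Prop) [DecidablePred P]
    (h : ∀ b, P b → mval v b ≤ mval w b) :
    (Finset.univ.filter fun i => P (v i)).card ≤ (Finset.univ.filter fun i => P (w i)).card := by
  set U := Finset.image v Finset.univ ∪ Finset.image w Finset.univ with hU
  rw [card_filter_eq_sum v P U (fun i _ => Finset.mem_union_left _ (Finset.mem_image_of_mem v (Finset.mem_univ i))),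
    card_filter_eq_sum w P U (fun i _ => Finset.mem_union_right _ (Finset.mem_image_of_mem w (Finset.mem_univ i)))]
  exact Finset.sum_le_sum fun b hb => h b (Finset.mem_filter.mp hb).2

theorem count_eq_count (v w : Fin n → ℚ) (P : ℚ → Prop) [DecidablePred P]
    (h : ∀ b, P b → mval v b = mval w b) :
    (Finset.univ.filter fun i => P (v i)).card = (Finset.univ.filter fun i => P (w i)).card :=
  le_antisymm (count_le_count v w P fun b hb => (h b hb).le)
    (count_le_count w v P fun b hb => (h b hb).ge)

/-- Half integers: basic facts -/
theorem hi_ne_zero {q : ℚ} (h : ∃ k : ℤ, q = (k : ℚ) + 1 / 2) : q ≠ 0 := by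
  obtain ⟨k, rfl⟩ := h
  intro h0
  have : (2*k + 1 : ℚ) = 0 := by linarith
  have : (2*k + 1 : ℤ) = 0 := by exact_mod_cast this
  omega

theorem hi_pos_iff {k : ℤ} : (0:ℚ) < (k : ℚ) + 1 / 2 ↔ 0 ≤ k := by
  constructor
  · intro h
    by_contra hk
    push_neg at hk
    have : (k : ℚ) ≤ -1 := by exact_mod_cast (by omega : k ≤ -1)
    linarith
  · intro h
    have : (0:ℚ) ≤ (k:ℚ) := by exact_mod_cast h
    linarith

theorem hi_add_one_le {q q' : ℚ} (hq : ∃ k : ℤ, q = (k : ℚ) + 1 / 2)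
    (hq' : ∃ k : ℤ, q' = (k : ℚ) + 1 / 2) (h : q < q') : q + 1 ≤ q' := by
  obtain ⟨k, rfl⟩ := hq
  obtain ⟨k', rfl⟩ := hq'
  have hkk' : (k:ℚ) < (k':ℚ) := by linarith
  have : k < k' := by exact_mod_cast hkk'
  have : (k:ℚ) + 1 ≤ (k':ℚ) := by exact_mod_cast (by omega : k + 1 ≤ k')
  linarith

theorem sharp_of_pos {v : Fin n → ℚ} {i : Fin n} {k : ℤ} (hv : v i = (k:ℚ) + 1/2) (hk : 0 ≤ k) :
    sharpInt v i = k + 1 := by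
  unfold sharpInt
  rw [hv, if_pos (hi_pos_iff.mpr hk)]
  have : (k:ℚ) + 1/2 + 1/2 = ((k + 1 : ℤ) : ℚ) := by push_cast; ring
  rw [this, Int.floor_intCast]

theorem sharp_of_neg {v : Fin n → ℚ} {i : Fin n} {k : ℤ} (hv : v i = (k:ℚ) + 1/2) (hk : k < 0) :
    sharpInt v i = k := by
  unfold sharpInt
  rw [hv, if_neg (by rw [hi_pos_iff]; omega)]
  have : (k:ℚ) + 1/2 + -(1/2) = ((k : ℤ) : ℚ) := by push_cast; ring
  rw [this, Int.floor_intCast]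

/-- positives of a weakly decreasing half-integer vector form an initial segment. -/
theorem lt_pc_iff {v : Fin n → ℚ} (hv : WkDec v) (hHI : HI v) (i : Fin n) :
    (i : ℕ) < pc v ↔ 0 < v i := by
  constructor
  · intro h
    by_contra hpos
    push_neg at hpos
    have hsub : (Finset.univ.filter fun j : Fin n => 0 < v j) ⊆ Finset.Iio i := by
      intro j hj
      have hj' : 0 < v j := (Finset.mem_filter.mp hj).2
      rw [Finset.mem_Iio]
      by_contra hij
      push_neg at hij
      exact absurd ((hv i j hij).trans hpos) (not_le.mpr hj')
    have := (Finset.card_le_card hsub).trans_eq (Fin.card_Iio i)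
    exact absurd (h.trans_le this) (lt_irrefl _)
  · intro h
    have hsub : Finset.Iic i ⊆ (Finset.univ.filter fun j : Fin n => 0 < v j) := by
      intro j hj
      rw [Finset.mem_Iic] at hj
      refine Finset.mem_filter.mpr ⟨Finset.mem_univ _, lt_of_lt_of_le h (hv j i hj)⟩
    have := (Fin.card_Iic i).symm.trans_le (Finset.card_le_card hsub)
    unfold pc
    omega

theorem dom_strict {v : Fin n → ℚ} (hd : Dom v) (hHI : HI v) {i j : Fin n} (hij : i < j) :
    v j < v i := by
  rcases lt_or_eq_of_le (hd i j hij).1 with h | h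
  · exact h
  · exact absurd ((hd i j hij).2 h.symm) (hi_ne_zero (hHI i))

theorem dom_wkdec {v : Fin n → ℚ} (hd : Dom v) : WkDec v := by
  intro i j hij
  rcases lt_or_eq_of_le hij with h | h
  · exact (hd i j h).1
  · rw [h]
theorem natq_pos {v : Fin n → ℚ} (hv : WkDec v) (hH : HI v) {i : Fin n} {k : ℤ}
    (h : v i = (k:ℚ) + 1/2) (hk : 0 ≤ k) : naturalQ v i = -(k+1) := by
  have hpos : 0 < v i := h ▸ hi_pos_iff.mpr hk
  unfold naturalQ flat
  rw [if_pos ((lt_pc_iff hv hH i).mpr hpos), sharp_of_pos h hk]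

theorem natq_neg {v : Fin n → ℚ} (hv : WkDec v) (hH : HI v) {i : Fin n} {k : ℤ}
    (h : v i = (k:ℚ) + 1/2) (hk : k < 0) : naturalQ v i = k := by
  have hpos : ¬ 0 < v i := by rw [h, hi_pos_iff]; omega
  unfold naturalQ flat
  rw [if_neg (fun hc => hpos ((lt_pc_iff hv hH i).mp hc)), sharp_of_neg h hk]

/-- splitting a signed sum evaluated at a point into two cardinalities -/
theorem sum_sign_eval (p : ℕ) (f : Fin n → ℤ) (S : Finset (Fin n)) (r : ℤ) :
    (∑ i ∈ S, (if (i:ℕ) < p then -(gam (f i)) else gam (f i))) r =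
      -((S.filter fun i : Fin n => (i:ℕ) < p ∧ f i = r).card : ℤ)
        + ((S.filter fun i : Fin n => ¬ (i:ℕ) < p ∧ f i = r).card : ℤ) := by
  rw [Finset.sum_apply]
  have : ∀ i ∈ S, (if (i:ℕ) < p then -(gam (f i)) else gam (f i)) r
      = (if (i:ℕ) < p then -(if f i = r then (1:ℤ) else 0) else (if f i = r then (1:ℤ) else 0)) := by
    intro i _
    by_cases h : (i:ℕ) < p <;> simp [h, gam, eq_comm]
  rw [Finset.sum_congr rfl this, Finset.sum_ite]
  have h1 : ∀ T : Finset (Fin n), (∑ i ∈ T, (if f i = r then (1:ℤ) else 0)) =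
      ((T.filter fun i : Fin n => f i = r).card : ℤ) := by
    intro T; rw [Finset.sum_boole]
  rw [Finset.sum_neg_distrib, h1, h1, Finset.filter_filter, Finset.filter_filter]

/-- windowed sum of a signed indicator sum -/
theorem sum_sign_window (p : ℕ) (f : Fin n → ℤ) (S : Finset (Fin n)) (t B : ℤ)
    (hB : ∀ i, B ≤ f i) :
    (∑ r ∈ Finset.Icc B t, (∑ i ∈ S, (if (i:ℕ) < p then -(gam (f i)) else gam (f i))) r) =
      -((S.filter fun i : Fin n => (i:ℕ) < p ∧ f i ≤ t).card : ℤ)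
        + ((S.filter fun i : Fin n => ¬ (i:ℕ) < p ∧ f i ≤ t).card : ℤ) := by
  have hcard : ∀ i, ((((Finset.Icc B t).filter (fun r => f i = r)).card : ℤ))
      = if f i ≤ t then 1 else 0 := by
    intro i
    rw [Finset.filter_eq]
    by_cases h : f i ≤ t
    · rw [if_pos (Finset.mem_Icc.mpr ⟨hB i, h⟩), if_pos h, Finset.card_singleton]
      norm_num
    · rw [if_neg (fun hc => h (Finset.mem_Icc.mp hc).2), if_neg h, Finset.card_empty]
      norm_num
  have hswap : (∑ r ∈ Finset.Icc B t, (∑ i ∈ S, (if (i:ℕ) < p then -(gam (f i)) else gam (f i))) r)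
      = ∑ i ∈ S, (if (i:ℕ) < p then -(if f i ≤ t then (1:ℤ) else 0)
          else (if f i ≤ t then (1:ℤ) else 0)) := by
    simp only [Finset.sum_apply]
    rw [Finset.sum_comm]
    refine Finset.sum_congr rfl fun i _ => ?_
    have hgsum : ∑ r ∈ Finset.Icc B t, gam (f i) r = if f i ≤ t then (1:ℤ) else 0 := by
      rw [← hcard i]
      simp only [gam]
      rw [Finset.sum_ite_eq' (Finset.Icc B t) (f i) (fun _ => (1:ℤ))]
      rw [Finset.filter_eq]
      by_cases h : f i ∈ Finset.Icc B t
      · rw [if_pos h, if_pos h, Finset.card_singleton]; norm_num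
      · rw [if_neg h, if_neg h, Finset.card_empty]; norm_num
    by_cases h : (i:ℕ) < p
    · simp only [h, if_true, Pi.neg_apply, Finset.sum_neg_distrib, hgsum]
    · simp only [h, if_false, hgsum]
  rw [hswap, Finset.sum_ite]
  have h1 : ∀ T : Finset (Fin n), (∑ i ∈ T, (if f i ≤ t then (1:ℤ) else 0)) =
      ((T.filter fun i : Fin n => f i ≤ t).card : ℤ) := by
    intro T; rw [Finset.sum_boole]
  rw [Finset.sum_neg_distrib, h1, h1, Finset.filter_filter, Finset.filter_filter]
theorem mval_zero_of_not_hi {v : Fin n → ℚ} (hH : HI v) {b : ℚ}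
    (hb : ¬ ∃ k : ℤ, b = (k:ℚ) + 1/2) : mval v b = 0 := by
  unfold mval
  rw [Finset.card_eq_zero, Finset.filter_eq_empty_iff]
  intro i _ hib
  exact hb ⟨(hH i).choose, hib ▸ (hH i).choose_spec⟩

theorem filter_nat_eq_pos {v : Fin n → ℚ} (hv : WkDec v) (hH : HI v) {k : ℤ} (hk : 0 ≤ k) :
    (Finset.univ.filter fun i : Fin n => (i:ℕ) < pc v ∧ naturalQ v i = -(k+1))
      = Finset.univ.filter fun i : Fin n => v i = (k:ℚ) + 1/2 := by
  ext i
  simp only [Finset.mem_filter, Finset.mem_univ, true_and]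
  obtain ⟨k', hk'⟩ := hH i
  constructor
  · rintro ⟨hip, hnat⟩
    have hpos : 0 < v i := (lt_pc_iff hv hH i).mp hip
    have hk'0 : 0 ≤ k' := hi_pos_iff.mp (hk' ▸ hpos)
    rw [natq_pos hv hH hk' hk'0] at hnat
    have : k' = k := by omega
    rw [hk', this]
  · intro hb
    have hk'k : k' = k := by
      have : (k':ℚ) = (k:ℚ) := by rw [hk'] at hb; linarith
      exact_mod_cast this
    subst hk'k
    refine ⟨(lt_pc_iff hv hH i).mpr (hk' ▸ hi_pos_iff.mpr hk), ?_⟩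
    rw [natq_pos hv hH hk' hk]

theorem filter_nat_eq_neg {v : Fin n → ℚ} (hv : WkDec v) (hH : HI v) {k : ℤ} (hk : 0 ≤ k) :
    (Finset.univ.filter fun i : Fin n => ¬ (i:ℕ) < pc v ∧ naturalQ v i = -(k+1))
      = Finset.univ.filter fun i : Fin n => v i = -((k:ℚ) + 1/2) := by
  ext i
  simp only [Finset.mem_filter, Finset.mem_univ, true_and]
  obtain ⟨k', hk'⟩ := hH i
  have hxval : -((k:ℚ) + 1/2) = ((-k-1 : ℤ):ℚ) + 1/2 := by push_cast; ring
  constructor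
  · rintro ⟨hip, hnat⟩
    have hpos : ¬ 0 < v i := fun hc => hip ((lt_pc_iff hv hH i).mpr hc)
    have hk'0 : k' < 0 := by
      by_contra hcon
      exact hpos (hk' ▸ hi_pos_iff.mpr (by omega))
    rw [natq_neg hv hH hk' hk'0] at hnat
    rw [hk', hxval, hnat]
    push_cast
    ring
  · intro hb
    rw [hxval] at hb
    have hk'k : k' = -k-1 := by
      have : (k':ℚ) = ((-k-1:ℤ):ℚ) := by rw [hk'] at hb; linarith
      exact_mod_cast this
    subst hk'k
    have hneg : ¬ 0 < v i := by rw [hk', hi_pos_iff]; omega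
    exact ⟨fun hc => hneg ((lt_pc_iff hv hH i).mp hc), by rw [natq_neg hv hH hk' (by omega)]; omega⟩

/-- `d`-statistics agree, from the degree-0 part of `ASucceq`. -/
theorem dcount_eq {lam mu : Fin n → ℚ} (hwl : WkDec lam) (hHl : HI lam)
    (hwm : WkDec mu) (hHm : HI mu) (hpc : pc lam = pc mu)
    (hw : (∑ i : Fin n, (if (i : ℕ) < pc lam then -(gam (naturalQ lam i)) else gam (naturalQ lam i))) =
      (∑ i : Fin n, (if (i : ℕ) < pc lam then -(gam (naturalQ mu i)) else gam (naturalQ mu i)))) :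
    ∀ b : ℚ, 0 < b → mval lam b + mval mu (-b) = mval mu b + mval lam (-b) := by
  intro b hb
  by_cases hhi : ∃ k : ℤ, b = (k:ℚ) + 1/2
  · obtain ⟨k, rfl⟩ := hhi
    have hk : 0 ≤ k := hi_pos_iff.mp hb
    have := congrFun hw (-(k+1))
    rw [sum_sign_eval, sum_sign_eval] at this
    rw [filter_nat_eq_pos hwl hHl hk, filter_nat_eq_neg hwl hHl hk] at this
    rw [hpc] at this
    rw [filter_nat_eq_pos hwm hHm hk, filter_nat_eq_neg hwm hHm hk] at this
    unfold mval
    omega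
  · have hhi' : ¬ ∃ k : ℤ, -b = (k:ℚ) + 1/2 := by
      rintro ⟨k, hkb⟩
      exact hhi ⟨-k-1, by push_cast; linarith⟩
    rw [mval_zero_of_not_hi hHl hhi, mval_zero_of_not_hi hHm hhi,
      mval_zero_of_not_hi hHl hhi', mval_zero_of_not_hi hHm hhi']
theorem pc_le (v : Fin n → ℚ) : pc v ≤ n := by
  have h := Finset.card_filter_le Finset.univ (fun i : Fin n => 0 < v i)
  simpa [pc] using h

theorem filter_nat_le_neg {v : Fin n → ℚ} (hv : WkDec v) (hH : HI v) {k : ℤ} (hk : 0 ≤ k)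
    {s : Fin n} (hs : (s:ℕ) = pc v) :
    ((Finset.univ.filter fun i : Fin n => s ≤ i).filter
        fun i : Fin n => ¬ (i:ℕ) < pc v ∧ naturalQ v i ≤ -(k+1))
      = Finset.univ.filter fun i : Fin n => v i ≤ -((k:ℚ) + 1/2) := by
  ext i
  simp only [Finset.mem_filter, Finset.mem_univ, true_and]
  obtain ⟨k', hk'⟩ := hH i
  have hxval : -((k:ℚ) + 1/2) = ((-k-1 : ℤ):ℚ) + 1/2 := by push_cast; ring
  constructor
  · rintro ⟨_, hip, hnat⟩
    have hk'0 : k' < 0 := by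
      by_contra hcon
      exact hip ((lt_pc_iff hv hH i).mpr (hk' ▸ hi_pos_iff.mpr (by omega)))
    rw [natq_neg hv hH hk' hk'0] at hnat
    rw [hk', hxval]
    have : (k':ℚ) ≤ ((-k-1:ℤ):ℚ) := by exact_mod_cast (by omega : k' ≤ -k-1)
    linarith
  · intro hb
    rw [hxval] at hb
    have hk'le : k' ≤ -k-1 := by
      have : (k':ℚ) ≤ ((-k-1:ℤ):ℚ) := by rw [hk'] at hb; linarith
      exact_mod_cast this
    have hip : ¬ (i:ℕ) < pc v := by
      intro hc
      have := (lt_pc_iff hv hH i).mp hc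
      rw [hk', hi_pos_iff] at this
      omega
    refine ⟨?_, hip, by rw [natq_neg hv hH hk' (by omega)]; omega⟩
    rw [Fin.le_def]
    omega

theorem filter_pos_part_empty {s : Fin n} {p : ℕ} (hs : (s:ℕ) = p) (P : Fin n → Prop)
    [DecidablePred P] :
    ((Finset.univ.filter fun i : Fin n => s ≤ i).filter
      fun i : Fin n => (i:ℕ) < p ∧ P i) = ∅ := by
  rw [Finset.filter_eq_empty_iff]
  rintro i hi ⟨hip, _⟩
  have := (Finset.mem_filter.mp hi).2
  rw [Fin.le_def] at this
  omega

/-- `N⁻` comparison from the cone conditions at `s = p`. -/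
theorem nle_mono {lam mu : Fin n → ℚ} (hwl : WkDec lam) (hHl : HI lam)
    (hwm : WkDec mu) (hHm : HI mu) (hpc : pc lam = pc mu)
    (hcone : ∀ s : Fin n, GCone (wtsA (pc lam) (naturalQ lam) s - wtsA (pc lam) (naturalQ mu) s)) :
    ∀ k : ℕ, (Finset.univ.filter fun i : Fin n => mu i ≤ -(((k:ℕ):ℚ) + 1/2)).card
      ≤ (Finset.univ.filter fun i : Fin n => lam i ≤ -(((k:ℕ):ℚ) + 1/2)).card := by
  intro k
  by_cases hpn : pc lam < n
  · set s : Fin n := ⟨pc lam, hpn⟩ with hs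
    have hsval : (s:ℕ) = pc lam := rfl
    obtain ⟨A, hAt, hwin⟩ := gcone_window (hcone s) (-(k+1))
    set L : Finset ℤ := insert A ((Finset.univ.image (naturalQ lam)) ∪ (Finset.univ.image (naturalQ mu))) with hL
    have hLne : L.Nonempty := ⟨A, Finset.mem_insert_self _ _⟩
    set B : ℤ := L.min' hLne with hB
    have hBA : B ≤ A := Finset.min'_le _ _ (Finset.mem_insert_self _ _)
    have hBl : ∀ i, B ≤ naturalQ lam i := fun i =>
      Finset.min'_le _ _ (Finset.mem_insert_of_mem (Finset.mem_union_left _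
        (Finset.mem_image_of_mem _ (Finset.mem_univ i))))
    have hBm : ∀ i, B ≤ naturalQ mu i := fun i =>
      Finset.min'_le _ _ (Finset.mem_insert_of_mem (Finset.mem_union_right _
        (Finset.mem_image_of_mem _ (Finset.mem_univ i))))
    have h0 := hwin B hBA
    have hsplit : (∑ r ∈ Finset.Icc B (-(k+1)),
        (wtsA (pc lam) (naturalQ lam) s - wtsA (pc lam) (naturalQ mu) s) r)
        = (∑ r ∈ Finset.Icc B (-(k+1)), wtsA (pc lam) (naturalQ lam) s r)
          - ∑ r ∈ Finset.Icc B (-(k+1)), wtsA (pc lam) (naturalQ mu) s r := by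
      simp only [Pi.sub_apply]
      rw [Finset.sum_sub_distrib]
    rw [hsplit] at h0
    unfold wtsA at h0
    rw [sum_sign_window _ _ _ _ _ hBl, sum_sign_window _ _ _ _ _ hBm] at h0
    rw [filter_pos_part_empty hsval, filter_pos_part_empty hsval] at h0
    have hkk : (0:ℤ) ≤ k := by positivity
    rw [filter_nat_le_neg hwl hHl hkk hsval] at h0
    have hsval' : (s:ℕ) = pc mu := hpc ▸ hsval
    rw [hpc] at h0
    rw [filter_nat_le_neg hwm hHm hkk hsval'] at h0
    simp only [Finset.card_empty] at h0
    push_cast at h0 ⊢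
    omega
  · have hpcn : pc lam = n := le_antisymm (pc_le lam) (not_lt.mp hpn)
    have hall : ∀ (v : Fin n → ℚ), WkDec v → HI v → pc v = n →
        (Finset.univ.filter fun i : Fin n => v i ≤ -(((k:ℕ):ℚ) + 1/2)).card = 0 := by
      intro v hv hH hpcv
      rw [Finset.card_eq_zero, Finset.filter_eq_empty_iff]
      intro i _ hle
      have : 0 < v i := (lt_pc_iff hv hH i).mp (by omega)
      have hk0 : (0:ℚ) ≤ (k:ℚ) := by positivity
      linarith
    rw [hall lam hwl hHl hpcn, hall mu hwm hHm (hpc ▸ hpcn)]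
/-- exchange identity: `T_λ(u) + N⁻_μ(u) = T_μ(u) + N⁻_λ(u)` given `d`-equality. -/
theorem exchange_identity {lam mu : Fin n → ℚ}
    (hd : ∀ b : ℚ, 0 < b → mval lam b + mval mu (-b) = mval mu b + mval lam (-b))
    {u : ℚ} (hu : 0 < u) :
    (Finset.univ.filter fun i : Fin n => u ≤ lam i).card
        + (Finset.univ.filter fun i : Fin n => mu i ≤ -u).card
      = (Finset.univ.filter fun i : Fin n => u ≤ mu i).card
        + (Finset.univ.filter fun i : Fin n => lam i ≤ -u).card := by
  classical
  set U : Finset ℚ := ((Finset.univ.image lam) ∪ (Finset.univ.image mu))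
    ∪ ((Finset.univ.image (fun i => -(lam i))) ∪ (Finset.univ.image (fun i => -(mu i)))) with hU
  have hUl : ∀ i, u ≤ lam i → lam i ∈ U := fun i _ =>
    Finset.mem_union_left _ (Finset.mem_union_left _ (Finset.mem_image_of_mem _ (Finset.mem_univ i)))
  have hUm : ∀ i, u ≤ mu i → mu i ∈ U := fun i _ =>
    Finset.mem_union_left _ (Finset.mem_union_right _ (Finset.mem_image_of_mem _ (Finset.mem_univ i)))
  have hUl' : ∀ i, u ≤ -(lam i) → -(lam i) ∈ U := fun i _ =>
    Finset.mem_union_right _ (Finset.mem_union_left _ (Finset.mem_image_of_mem _ (Finset.mem_univ i)))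
  have hUm' : ∀ i, u ≤ -(mu i) → -(mu i) ∈ U := fun i _ =>
    Finset.mem_union_right _ (Finset.mem_union_right _ (Finset.mem_image_of_mem _ (Finset.mem_univ i)))
  have h1 := card_filter_eq_sum lam (fun b => u ≤ b) U hUl
  have h2 := card_filter_eq_sum mu (fun b => u ≤ b) U hUm
  have h3 := card_filter_eq_sum (fun i => -(lam i)) (fun b => u ≤ b) U hUl'
  have h4 := card_filter_eq_sum (fun i => -(mu i)) (fun b => u ≤ b) U hUm'
  have hml : ∀ b : ℚ, mval (fun i => -(lam i)) b = mval lam (-b) := by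
    intro b
    unfold mval
    congr 1
    ext i
    simp only [Finset.mem_filter, Finset.mem_univ, true_and, neg_eq_iff_eq_neg]
  have hmm : ∀ b : ℚ, mval (fun i => -(mu i)) b = mval mu (-b) := by
    intro b
    unfold mval
    congr 1
    ext i
    simp only [Finset.mem_filter, Finset.mem_univ, true_and, neg_eq_iff_eq_neg]
  have hfl : (Finset.univ.filter fun i : Fin n => lam i ≤ -u)
      = Finset.univ.filter fun i : Fin n => u ≤ -(lam i) := by
    ext i; simp only [Finset.mem_filter, Finset.mem_univ, true_and, le_neg]
  have hfm : (Finset.univ.filter fun i : Fin n => mu i ≤ -u)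
      = Finset.univ.filter fun i : Fin n => u ≤ -(mu i) := by
    ext i; simp only [Finset.mem_filter, Finset.mem_univ, true_and, le_neg]
  rw [hfl, hfm, h1, h2, h3, h4, ← Finset.sum_add_distrib, ← Finset.sum_add_distrib]
  refine Finset.sum_congr rfl fun b hb => ?_
  have hub : 0 < b := lt_of_lt_of_le hu (Finset.mem_filter.mp hb).2
  rw [hml, hmm]
  exact hd b hub

/-- `T`-comparison. -/
theorem tge_mono {lam mu : Fin n → ℚ}
    (hd : ∀ b : ℚ, 0 < b → mval lam b + mval mu (-b) = mval mu b + mval lam (-b))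
    (hnle : ∀ k : ℕ, (Finset.univ.filter fun i : Fin n => mu i ≤ -(((k:ℕ):ℚ) + 1/2)).card
      ≤ (Finset.univ.filter fun i : Fin n => lam i ≤ -(((k:ℕ):ℚ) + 1/2)).card) :
    ∀ k : ℕ, (Finset.univ.filter fun i : Fin n => ((k:ℕ):ℚ) + 1/2 ≤ mu i).card
      ≤ (Finset.univ.filter fun i : Fin n => ((k:ℕ):ℚ) + 1/2 ≤ lam i).card := by
  intro k
  have hu : (0:ℚ) < ((k:ℕ):ℚ) + 1/2 := by positivity
  have := exchange_identity hd hu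
  have := hnle k
  omega
/-- weakly decreasing vectors with the same multiplicities are equal -/
theorem wkdec_eq_of_mval {v w : Fin n → ℚ} (hv : WkDec v) (hw : WkDec w)
    (h : ∀ b, mval v b = mval w b) : v = w := by
  have key : ∀ (v w : Fin n → ℚ), WkDec v → WkDec w → (∀ b, mval v b = mval w b) →
      ∀ i, ¬ (v i < w i) := by
    intro v w hv hw h i hlt
    have h1 : Finset.Iic i ⊆ Finset.univ.filter fun j => w i ≤ w j := by
      intro j hj
      exact Finset.mem_filter.mpr ⟨Finset.mem_univ _, hw j i (Finset.mem_Iic.mp hj)⟩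
    have h2 : (Finset.univ.filter fun j => w i ≤ v j) ⊆ Finset.Iio i := by
      intro j hj
      rw [Finset.mem_Iio]
      by_contra hc
      push_neg at hc
      exact absurd ((hv i j hc).trans_lt hlt) (not_lt.mpr (Finset.mem_filter.mp hj).2)
    have hcnt : (Finset.univ.filter fun j => w i ≤ v j).card
        = (Finset.univ.filter fun j => w i ≤ w j).card :=
      count_eq_count v w (fun b => w i ≤ b) (fun b _ => h b)
    have hA := (Fin.card_Iic i).symm.trans_le (Finset.card_le_card h1)
    have hB := (Finset.card_le_card h2).trans_eq (Fin.card_Iio i)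
    omega
  funext i
  exact le_antisymm (not_lt.mp (key w v hw hv (fun b => (h b).symm) i))
    (not_lt.mp (key v w hv hw h i))

theorem ceil_hi (k : ℤ) : ⌈(k:ℚ) + 1/2⌉ = k + 1 := by
  have h : ⌈(1:ℚ)/2⌉ = 1 := by
    rw [Int.ceil_eq_iff]
    norm_num
  rw [add_comm, Int.ceil_add_intCast, h, add_comm]

theorem mval_pos_exists {v : Fin n → ℚ} {b : ℚ} (h : 0 < mval v b) : ∃ i, v i = b := by
  obtain ⟨i, hi⟩ := Finset.card_pos.mp h
  exact ⟨i, (Finset.mem_filter.mp hi).2⟩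

/-- bound for the measure -/
def BB (lam : Fin n → ℚ) : ℕ := Finset.univ.sup (fun j => (⌈lam j⌉).toNat)

/-- the measure for the induction -/
def phi (lam v : Fin n → ℚ) : ℕ := ∑ i : Fin n, (BB lam - (⌈v i⌉).toNat)

theorem ceil_le_BB {lam v : Fin n → ℚ} (hH : HI v)
    (hT : ∀ k : ℕ, (Finset.univ.filter fun i : Fin n => ((k:ℕ):ℚ) + 1/2 ≤ v i).card
      ≤ (Finset.univ.filter fun i : Fin n => ((k:ℕ):ℚ) + 1/2 ≤ lam i).card)
    (i : Fin n) : (⌈v i⌉).toNat ≤ BB lam := by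
  rcases le_or_gt (v i) 0 with h | h
  · have : ⌈v i⌉ ≤ 0 := Int.ceil_le.mpr (by exact_mod_cast h)
    rw [Int.toNat_of_nonpos this]
    exact Nat.zero_le _
  · obtain ⟨k, hk⟩ := hH i
    have hk0 : 0 ≤ k := hi_pos_iff.mp (hk ▸ h)
    have hcast : ((k.toNat : ℕ) : ℚ) = (k : ℚ) := by
      rw [← Int.toNat_of_nonneg hk0]; push_cast; rfl
    have hmem : i ∈ Finset.univ.filter fun j : Fin n => ((k.toNat:ℕ):ℚ) + 1/2 ≤ v j :=
      Finset.mem_filter.mpr ⟨Finset.mem_univ _, by rw [hcast, ← hk]⟩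
    have hpos : 0 < (Finset.univ.filter fun j : Fin n => ((k.toNat:ℕ):ℚ) + 1/2 ≤ lam j).card :=
      lt_of_lt_of_le (Finset.card_pos.mpr ⟨i, hmem⟩) (hT k.toNat)
    obtain ⟨j, hj⟩ := Finset.card_pos.mp hpos
    have hle : v i ≤ lam j := by
      rw [hk, ← hcast]
      exact (Finset.mem_filter.mp hj).2
    calc (⌈v i⌉).toNat ≤ (⌈lam j⌉).toNat := by
          have := Int.ceil_le_ceil (R := ℚ) hle
          omega
      _ ≤ BB lam := Finset.le_sup (f := fun j => (⌈lam j⌉).toNat) (Finset.mem_univ j)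
set_option maxHeartbeats 2000000 in
theorem reach {lam : Fin n → ℚ} (hwl : WkDec lam) (hHl : HI lam) :
    ∀ F : ℕ, ∀ v : Fin n → ℚ, phi lam v = F → WkDec v → HI v → pc v = pc lam →
    (∀ b : ℚ, 0 < b → mval v b + mval lam (-b) = mval lam b + mval v (-b)) →
    (∀ k : ℕ, (Finset.univ.filter fun i : Fin n => ((k:ℕ):ℚ) + 1/2 ≤ v i).card
      ≤ (Finset.univ.filter fun i : Fin n => ((k:ℕ):ℚ) + 1/2 ≤ lam i).card) →
    Relation.ReflTransGen PSStep v lam := by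
  intro F
  induction F using Nat.strong_induction_on with
  | _ F IH =>
  intro v hF hv hH hpc hd hT
  by_cases heq : ∀ b, mval v b = mval lam b
  · rw [wkdec_eq_of_mval hv hwl heq]
  -- Step B : find the largest differing (positive) value a
  push_neg at heq
  have hdiffpos : ∃ b : ℚ, 0 < b ∧ mval v b ≠ mval lam b := by
    obtain ⟨b, hb⟩ := heq
    rcases lt_trichotomy 0 b with h | h | h
    · exact ⟨b, h, hb⟩
    · exfalso
      apply hb
      have hz : ∀ (u : Fin n → ℚ), HI u → mval u b = 0 := by
        intro u hu
        unfold mval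
        rw [Finset.card_eq_zero, Finset.filter_eq_empty_iff]
        intro i _ hib
        exact hi_ne_zero (hu i) (hib.trans h.symm)
      rw [hz v hH, hz lam hHl]
    · have h2 := hd (-b) (by linarith)
      rw [neg_neg] at h2
      exact ⟨-b, by linarith, by omega⟩
  have himg : ∀ bb : ℚ, mval v bb ≠ mval lam bb →
      bb ∈ (Finset.univ.image v ∪ Finset.univ.image lam) := by
    intro bb hbb
    rcases Nat.eq_zero_or_pos (mval v bb) with h0 | hpos
    · have : 0 < mval lam bb := by omega
      obtain ⟨i, hi⟩ := mval_pos_exists this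
      exact Finset.mem_union_right _ (Finset.mem_image.mpr ⟨i, Finset.mem_univ _, hi⟩)
    · obtain ⟨i, hi⟩ := mval_pos_exists hpos
      exact Finset.mem_union_left _ (Finset.mem_image.mpr ⟨i, Finset.mem_univ _, hi⟩)
  set S : Finset ℚ := (Finset.univ.image v ∪ Finset.univ.image lam).filter
    (fun b => 0 < b ∧ mval v b ≠ mval lam b) with hSdef
  have hSne : S.Nonempty := by
    obtain ⟨b, hb1, hb2⟩ := hdiffpos
    exact ⟨b, Finset.mem_filter.mpr ⟨himg b hb2, hb1, hb2⟩⟩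
  set a : ℚ := S.max' hSne with hadef
  have haS := S.max'_mem hSne
  have ha_pos : 0 < a := (Finset.mem_filter.mp haS).2.1
  have ha_ne : mval v a ≠ mval lam a := (Finset.mem_filter.mp haS).2.2
  have hamax : ∀ b, a < b → mval v b = mval lam b := by
    intro b hab
    by_contra hne
    exact absurd (S.le_max' b (Finset.mem_filter.mpr ⟨himg b hne, ha_pos.trans hab, hne⟩))
      (not_le.mpr hab)
  have haH : ∃ k : ℤ, a = (k:ℚ) + 1/2 := by
    rcases Finset.mem_union.mp (Finset.mem_filter.mp haS).1 with h | h
    · obtain ⟨i, -, hi⟩ := Finset.mem_image.mp h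
      obtain ⟨k, hk⟩ := hH i
      exact ⟨k, by rw [hadef, ← hi, hk]⟩
    · obtain ⟨i, -, hi⟩ := Finset.mem_image.mp h
      obtain ⟨k, hk⟩ := hHl i
      exact ⟨k, by rw [hadef, ← hi, hk]⟩
  obtain ⟨ka, hka⟩ := haH
  have hka0 : 0 ≤ ka := hi_pos_iff.mp (hka ▸ ha_pos)
  -- Step C : mval v a < mval lam a, and strict T-inequality at a
  have habove : (Finset.univ.filter fun i => a < v i).card
      = (Finset.univ.filter fun i => a < lam i).card :=
    count_eq_count v lam (fun b => a < b) (fun b hb => hamax b hb)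
  have hsplitv : ∀ (w : Fin n → ℚ), (Finset.univ.filter fun i => a ≤ w i).card
      = mval w a + (Finset.univ.filter fun i => a < w i).card := by
    intro w
    have hun : (Finset.univ.filter fun i => a ≤ w i)
        = (Finset.univ.filter fun i => w i = a) ∪ (Finset.univ.filter fun i => a < w i) := by
      ext i
      simp only [Finset.mem_filter, Finset.mem_univ, true_and, Finset.mem_union]
      constructor
      · intro h
        rcases eq_or_lt_of_le h with h' | h'
        · exact Or.inl h'.symm
        · exact Or.inr h'
      · rintro (h | h)
        · exact h.ge
        · exact h.le
    have hdisj : Disjoint (Finset.univ.filter fun i => w i = a)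
        (Finset.univ.filter fun i => a < w i) := by
      rw [Finset.disjoint_left]
      intro i h1 h2
      have e1 := (Finset.mem_filter.mp h1).2
      have e2 := (Finset.mem_filter.mp h2).2
      rw [e1] at e2
      exact lt_irrefl a e2
    rw [hun, Finset.card_union_of_disjoint hdisj]
    rfl
  have hTa : (Finset.univ.filter fun i => a ≤ v i).card
      ≤ (Finset.univ.filter fun i => a ≤ lam i).card := by
    have hthis := hT ka.toNat
    have hcast : ((ka.toNat : ℕ) : ℚ) = (ka : ℚ) := by
      rw [← Int.toNat_of_nonneg hka0]
      push_cast
      rfl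
    rw [hcast, ← hka] at hthis
    exact hthis
  have hmlt : mval v a < mval lam a := by
    rw [hsplitv v, hsplitv lam, habove] at hTa
    omega
  have hTa_strict : (Finset.univ.filter fun i => a ≤ v i).card
      < (Finset.univ.filter fun i => a ≤ lam i).card := by
    rw [hsplitv v, hsplitv lam, habove]
    omega
  -- Step D : find c, the largest value below a where v exceeds lam
  set S' : Finset ℚ := (Finset.univ.image v).filter
    (fun b => 0 < b ∧ b < a ∧ mval lam b < mval v b) with hS'def
  have hS'ne : S'.Nonempty := by
    by_contra hempty
    rw [Finset.not_nonempty_iff_eq_empty, Finset.filter_eq_empty_iff] at hempty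
    have hble : ∀ b : ℚ, (0 < b ∧ b < a) → mval v b ≤ mval lam b := by
      intro b hb
      by_contra hgt
      push_neg at hgt
      have hvb : 0 < mval v b := by omega
      obtain ⟨i, hi⟩ := mval_pos_exists hvb
      exact hempty (Finset.mem_image.mpr ⟨i, Finset.mem_univ _, hi⟩) ⟨hb.1, hb.2, hgt⟩
    have hcmp := count_le_count v lam (fun b => 0 < b ∧ b < a) hble
    have hsplit2 : ∀ (w : Fin n → ℚ), (Finset.univ.filter fun i => 0 < w i).card
        = (Finset.univ.filter fun i => 0 < w i ∧ w i < a).card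
          + (Finset.univ.filter fun i => a ≤ w i).card := by
      intro w
      have hun : (Finset.univ.filter fun i => 0 < w i)
          = (Finset.univ.filter fun i => 0 < w i ∧ w i < a)
            ∪ (Finset.univ.filter fun i => a ≤ w i) := by
        ext i
        simp only [Finset.mem_filter, Finset.mem_univ, true_and, Finset.mem_union]
        constructor
        · intro h
          rcases lt_or_ge (w i) a with h' | h'
          · exact Or.inl ⟨h, h'⟩
          · exact Or.inr h'
        · rintro (h | h)
          · exact h.1
          · linarith
      have hdisj : Disjoint (Finset.univ.filter fun i => 0 < w i ∧ w i < a)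
          (Finset.univ.filter fun i => a ≤ w i) := by
        rw [Finset.disjoint_left]
        intro i h1 h2
        have e1 := (Finset.mem_filter.mp h1).2.2
        have e2 := (Finset.mem_filter.mp h2).2
        linarith
      rw [hun, Finset.card_union_of_disjoint hdisj]
    have hpcv := hsplit2 v
    have hpcl := hsplit2 lam
    unfold pc at hpc
    omega
  set c : ℚ := S'.max' hS'ne with hcdef
  have hcS := S'.max'_mem hS'ne
  have hc_pos : 0 < c := (Finset.mem_filter.mp hcS).2.1
  have hc_lt : c < a := (Finset.mem_filter.mp hcS).2.2.1
  have hc_m : mval lam c < mval v c := (Finset.mem_filter.mp hcS).2.2.2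
  have hcH : ∃ k : ℤ, c = (k:ℚ) + 1/2 := by
    obtain ⟨i, -, hi⟩ := Finset.mem_image.mp (Finset.mem_filter.mp hcS).1
    obtain ⟨k, hk⟩ := hH i
    exact ⟨k, by rw [hcdef, ← hi, hk]⟩
  obtain ⟨kc, hkc⟩ := hcH
  have hkc0 : 0 ≤ kc := hi_pos_iff.mp (hkc ▸ hc_pos)
  have hcmax : ∀ b, c < b → b < a → mval v b ≤ mval lam b := by
    intro b h1 h2
    by_contra hgt
    push_neg at hgt
    obtain ⟨i, hi⟩ := mval_pos_exists (show 0 < mval v b by omega)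
    exact absurd (S'.le_max' b (Finset.mem_filter.mpr
      ⟨Finset.mem_image.mpr ⟨i, Finset.mem_univ _, hi⟩, hc_pos.trans h1, h2, hgt⟩))
      (not_le.mpr h1)
  -- Step E : the pair (c, -c) exists in v
  have hvc : 0 < mval v c := by omega
  have hvnc : 0 < mval v (-c) := by
    have := hd c hc_pos
    omega
  have hT0ne : (Finset.univ.filter fun i => v i = c).Nonempty := Finset.card_pos.mp hvc
  have hT1ne : (Finset.univ.filter fun i => v i = -c).Nonempty := Finset.card_pos.mp hvnc
  set i₀ : Fin n := (Finset.univ.filter fun i => v i = c).min' hT0ne with hi₀def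
  set j₀ : Fin n := (Finset.univ.filter fun i => v i = -c).max' hT1ne with hj₀def
  have hvi₀ : v i₀ = c := (Finset.mem_filter.mp (Finset.min'_mem _ hT0ne)).2
  have hvj₀ : v j₀ = -c := (Finset.mem_filter.mp (Finset.max'_mem _ hT1ne)).2
  have hij : i₀ < j₀ := by
    by_contra hc'
    push_neg at hc'
    have := hv j₀ i₀ hc'
    rw [hvi₀, hvj₀] at this
    linarith
  have hijne : i₀ ≠ j₀ := ne_of_lt hij
  -- Step F : the step
  set w : Fin n → ℚ := fun k => v k + (if k = i₀ then (1:ℚ) else 0)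
    - (if k = j₀ then (1:ℚ) else 0) with hwdef
  have hwi₀ : w i₀ = c + 1 := by
    simp only [hwdef, if_pos rfl, if_neg hijne, hvi₀]
    norm_num
  have hwj₀ : w j₀ = -c - 1 := by
    simp only [hwdef, if_pos rfl, if_neg (Ne.symm hijne), hvj₀]
    norm_num
  have hwk : ∀ k, k ≠ i₀ → k ≠ j₀ → w k = v k := by
    intro k h1 h2
    simp only [hwdef, if_neg h1, if_neg h2]
    ring
  have hmin_i₀ : ∀ k, k < i₀ → c + 1 ≤ v k := by
    intro k hk
    have hne : v k ≠ c := by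
      intro hc'
      exact absurd (Finset.min'_le _ k (Finset.mem_filter.mpr ⟨Finset.mem_univ _, hc'⟩))
        (not_le.mpr hk)
    have hge : c ≤ v k := hvi₀ ▸ hv k i₀ hk.le
    exact hi_add_one_le ⟨kc, hkc⟩ (hH k) (lt_of_le_of_ne hge (Ne.symm hne))
  have hmax_j₀ : ∀ k, j₀ < k → v k ≤ -c - 1 := by
    intro k hk
    have hne : v k ≠ -c := by
      intro hc'
      exact absurd (Finset.le_max' _ k (Finset.mem_filter.mpr ⟨Finset.mem_univ _, hc'⟩))
        (not_le.mpr hk)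
    have hle : v k ≤ -c := hvj₀ ▸ hv j₀ k hk.le
    have := hi_add_one_le (hH k) ⟨-kc-1, by rw [hkc]; push_cast; ring⟩
      (lt_of_le_of_ne hle hne)
    linarith
  have hwdec_w : WkDec w := by
    intro i j hij'
    rcases eq_or_ne i i₀ with rfl | hii
    · rcases eq_or_ne j i₀ with rfl | hji
      · exact le_rfl
      rcases eq_or_ne j j₀ with rfl | hjj
      · rw [hwi₀, hwj₀]; linarith
      · rw [hwi₀, hwk j hji hjj]
        have := hv i₀ j hij'
        rw [hvi₀] at this
        linarith
    rcases eq_or_ne i j₀ with rfl | hij₀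
    · rcases eq_or_ne j j₀ with rfl | hjj
      · exact le_rfl
      · have hj : j₀ < j := lt_of_le_of_ne hij' (Ne.symm hjj)
        have hji₀ : j ≠ i₀ := by
          intro h
          rw [h] at hj
          exact absurd (hij.trans hj) (lt_irrefl _)
        rw [hwk j hji₀ hjj, hwj₀]
        exact hmax_j₀ j hj
    · rcases eq_or_ne j i₀ with rfl | hji
      · rw [hwk i hii hij₀, hwi₀]
        exact hmin_i₀ i (lt_of_le_of_ne hij' hii)
      rcases eq_or_ne j j₀ with rfl | hjj
      · rw [hwk i hii hij₀, hwj₀]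
        have := hv i j₀ hij'
        rw [hvj₀] at this
        linarith
      · rw [hwk i hii hij₀, hwk j hji hjj]
        exact hv i j hij'
  have hstep : PSStep v w := ⟨hv, hwdec_w, i₀, j₀, hij, by rw [hvi₀, hvj₀]; ring, hwdef⟩
  -- Step G : invariants of w
  have hHw : HI w := by
    intro k
    rcases eq_or_ne k i₀ with rfl | h1
    · exact ⟨kc + 1, by rw [hwi₀, hkc]; push_cast; ring⟩
    rcases eq_or_ne k j₀ with rfl | h2
    · exact ⟨-kc - 2, by rw [hwj₀, hkc]; push_cast; ring⟩
    · rw [hwk k h1 h2]; exact hH k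
  have hmval_w : ∀ b, b ≠ c → b ≠ c + 1 → b ≠ -c → b ≠ -c - 1 → mval w b = mval v b := by
    intro b h1 h2 h3 h4
    unfold mval
    congr 1
    ext i
    simp only [Finset.mem_filter, Finset.mem_univ, true_and]
    rcases eq_or_ne i i₀ with rfl | hi
    · rw [hwi₀, hvi₀]
      exact ⟨fun h => absurd h.symm h2, fun h => absurd h.symm h1⟩
    rcases eq_or_ne i j₀ with rfl | hj
    · rw [hwj₀, hvj₀]
      exact ⟨fun h => absurd h.symm h4, fun h => absurd h.symm h3⟩
    · rw [hwk i hi hj]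
  have hne_cc1 : c ≠ c + 1 := by linarith
  have hmw_c : mval w c + 1 = mval v c := by
    have hfe : (Finset.univ.filter fun i => w i = c)
        = (Finset.univ.filter fun i => v i = c).erase i₀ := by
      ext i
      simp only [Finset.mem_erase, Finset.mem_filter, Finset.mem_univ, true_and]
      rcases eq_or_ne i i₀ with rfl | hi
      · rw [hwi₀]
        exact ⟨fun h => absurd h.symm hne_cc1, fun h => absurd rfl h.1⟩
      rcases eq_or_ne i j₀ with rfl | hj
      · rw [hwj₀, hvj₀]
        constructor
        · intro h; linarith
        · rintro ⟨-, h⟩; linarith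
      · rw [hwk i hi hj]
        exact ⟨fun h => ⟨hi, h⟩, fun h => h.2⟩
    unfold mval
    rw [hfe, Finset.card_erase_of_mem (a := i₀) (s := Finset.univ.filter fun i => v i = c)
      (Finset.mem_filter.mpr ⟨Finset.mem_univ i₀, hvi₀⟩)]
    have : 0 < (Finset.univ.filter fun i => v i = c).card := hvc
    omega
  have hmw_c1 : mval w (c+1) = mval v (c+1) + 1 := by
    have hfe : (Finset.univ.filter fun i => w i = c + 1)
        = insert i₀ (Finset.univ.filter fun i => v i = c + 1) := by
      ext i
      simp only [Finset.mem_insert, Finset.mem_filter, Finset.mem_univ, true_and]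
      rcases eq_or_ne i i₀ with rfl | hi
      · rw [hwi₀]
        exact ⟨fun _ => Or.inl rfl, fun _ => rfl⟩
      rcases eq_or_ne i j₀ with rfl | hj
      · rw [hwj₀, hvj₀]
        constructor
        · intro h; linarith
        · rintro (h | h)
          · exact absurd h (Ne.symm (ne_of_lt hij))
          · linarith
      · rw [hwk i hi hj]
        exact ⟨Or.inr, fun h => h.elim (fun h' => absurd h' hi) id⟩
    unfold mval
    rw [hfe, Finset.card_insert_of_notMem]
    intro hmem
    have := (Finset.mem_filter.mp hmem).2
    rw [hvi₀] at this
    linarith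
  have hmw_nc : mval w (-c) + 1 = mval v (-c) := by
    have hfe : (Finset.univ.filter fun i => w i = -c)
        = (Finset.univ.filter fun i => v i = -c).erase j₀ := by
      ext i
      simp only [Finset.mem_erase, Finset.mem_filter, Finset.mem_univ, true_and]
      rcases eq_or_ne i i₀ with rfl | hi
      · rw [hwi₀, hvi₀]
        constructor
        · intro h; linarith
        · rintro ⟨-, h⟩; linarith
      rcases eq_or_ne i j₀ with rfl | hj
      · rw [hwj₀]
        constructor
        · intro h; linarith
        · rintro ⟨h, -⟩; exact absurd rfl h
      · rw [hwk i hi hj]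
        exact ⟨fun h => ⟨hj, h⟩, fun h => h.2⟩
    unfold mval
    rw [hfe, Finset.card_erase_of_mem (a := j₀) (s := Finset.univ.filter fun i => v i = -c)
      (Finset.mem_filter.mpr ⟨Finset.mem_univ j₀, hvj₀⟩)]
    have : 0 < (Finset.univ.filter fun i => v i = -c).card := hvnc
    omega
  have hmw_nc1 : mval w (-c-1) = mval v (-c-1) + 1 := by
    have hfe : (Finset.univ.filter fun i => w i = -c - 1)
        = insert j₀ (Finset.univ.filter fun i => v i = -c - 1) := by
      ext i
      simp only [Finset.mem_insert, Finset.mem_filter, Finset.mem_univ, true_and]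
      rcases eq_or_ne i i₀ with rfl | hi
      · rw [hwi₀, hvi₀]
        constructor
        · intro h; linarith
        · rintro (h | h)
          · exact absurd h (ne_of_lt hij)
          · linarith
      rcases eq_or_ne i j₀ with rfl | hj
      · rw [hwj₀]
        exact ⟨fun _ => Or.inl rfl, fun _ => rfl⟩
      · rw [hwk i hi hj]
        exact ⟨Or.inr, fun h => h.elim (fun h' => absurd h' hj) id⟩
    unfold mval
    rw [hfe, Finset.card_insert_of_notMem]
    intro hmem
    have := (Finset.mem_filter.mp hmem).2
    rw [hvj₀] at this
    linarith
  have hpcw : pc w = pc v := by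
    unfold pc
    congr 1
    ext i
    simp only [Finset.mem_filter, Finset.mem_univ, true_and]
    rcases eq_or_ne i i₀ with rfl | hi
    · rw [hwi₀, hvi₀]
      constructor <;> intro <;> linarith
    rcases eq_or_ne i j₀ with rfl | hj
    · rw [hwj₀, hvj₀]
      constructor <;> intro <;> linarith
    · rw [hwk i hi hj]
  have hdw : ∀ b : ℚ, 0 < b → mval w b + mval lam (-b) = mval lam b + mval w (-b) := by
    intro b hb
    rcases eq_or_ne b c with rfl | h1
    · have h := hd c hc_pos
      omega
    rcases eq_or_ne b (c+1) with rfl | h2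
    · have hx : -(c+1) = -c - 1 := by ring
      have h := hd (c+1) (by linarith)
      rw [hx] at h ⊢
      omega
    · rw [hmval_w b h1 h2 (by intro h; rw [h] at hb; linarith)
        (by intro h; rw [h] at hb; linarith),
        hmval_w (-b) (by intro h; apply h1; linarith) (by intro h; apply h2; linarith)
        (by simpa using h1) (by intro h; apply h2; linarith)]
      exact hd b hb
  have hTw : ∀ k : ℕ, (Finset.univ.filter fun i : Fin n => ((k:ℕ):ℚ) + 1/2 ≤ w i).card
      ≤ (Finset.univ.filter fun i : Fin n => ((k:ℕ):ℚ) + 1/2 ≤ lam i).card := by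
    intro k
    set u : ℚ := ((k:ℕ):ℚ) + 1/2 with hudef
    have hu_pos : 0 < u := by positivity
    have huH : ∃ kk : ℤ, u = (kk:ℚ) + 1/2 := ⟨(k:ℤ), by rw [hudef]; push_cast; ring⟩
    rcases eq_or_ne u (c+1) with hu | hu
    · have hins : Finset.univ.filter (fun i => u ≤ w i)
          = insert i₀ (Finset.univ.filter (fun i => u ≤ v i)) := by
        ext i
        simp only [Finset.mem_insert, Finset.mem_filter, Finset.mem_univ, true_and]
        rcases eq_or_ne i i₀ with rfl | hi
        · rw [hwi₀]
          exact ⟨fun _ => Or.inl rfl, fun _ => hu.le⟩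
        rcases eq_or_ne i j₀ with rfl | hj
        · rw [hwj₀, hvj₀]
          constructor
          · intro h; exfalso; rw [hu] at h; linarith
          · rintro (h | h)
            · exact absurd h (Ne.symm (ne_of_lt hij))
            · exfalso; linarith
        · rw [hwk i hi hj]
          exact ⟨Or.inr, fun h => h.elim (fun h' => absurd h' hi) id⟩
      have hnm : i₀ ∉ Finset.univ.filter (fun i => u ≤ v i) := by
        intro hmem
        have := (Finset.mem_filter.mp hmem).2
        rw [hvi₀, hu] at this
        linarith
      rw [hins, Finset.card_insert_of_notMem hnm]
      -- strict inequality at u = c+1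
      have hu_le_a : u ≤ a := hu ▸ hi_add_one_le ⟨kc, hkc⟩ ⟨ka, hka⟩ hc_lt
      have hdec : ∀ (x : Fin n → ℚ), (Finset.univ.filter fun i => u ≤ x i).card
          = (Finset.univ.filter fun i => u ≤ x i ∧ x i < a).card
            + (Finset.univ.filter fun i => a ≤ x i).card := by
        intro x
        have hun : (Finset.univ.filter fun i => u ≤ x i)
            = (Finset.univ.filter fun i => u ≤ x i ∧ x i < a)
              ∪ (Finset.univ.filter fun i => a ≤ x i) := by
          ext i
          simp only [Finset.mem_filter, Finset.mem_univ, true_and, Finset.mem_union]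
          constructor
          · intro h
            rcases lt_or_ge (x i) a with h' | h'
            · exact Or.inl ⟨h, h'⟩
            · exact Or.inr h'
          · rintro (h | h)
            · exact h.1
            · exact hu_le_a.trans h
        have hdisj : Disjoint (Finset.univ.filter fun i => u ≤ x i ∧ x i < a)
            (Finset.univ.filter fun i => a ≤ x i) := by
          rw [Finset.disjoint_left]
          intro i h1' h2'
          have e1 := (Finset.mem_filter.mp h1').2.2
          have e2 := (Finset.mem_filter.mp h2').2
          linarith
        rw [hun, Finset.card_union_of_disjoint hdisj]
      have hmid := count_le_count v lam (fun b => u ≤ b ∧ b < a)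
        (fun b hb => hcmax b (by rw [hu] at hb; linarith [hb.1]) hb.2)
      rw [hdec v, hdec lam]
      omega
    · have hsame : Finset.univ.filter (fun i => u ≤ w i)
          = Finset.univ.filter (fun i => u ≤ v i) := by
        ext i
        simp only [Finset.mem_filter, Finset.mem_univ, true_and]
        rcases eq_or_ne i i₀ with rfl | hi
        · rw [hwi₀, hvi₀]
          constructor
          · intro h
            by_contra hc'
            push_neg at hc'
            have := hi_add_one_le ⟨kc, hkc⟩ huH hc'
            have : u = c + 1 := le_antisymm h this
            exact hu this
          · intro h; linarith
        rcases eq_or_ne i j₀ with rfl | hj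
        · rw [hwj₀, hvj₀]
          constructor <;> intro h <;> exfalso <;> linarith
        · rw [hwk i hi hj]
      rw [hsame]
      exact hT k
  -- the measure decreases
  have hphiw : phi lam w < phi lam v := by
    unfold phi
    rw [← Finset.sum_erase_add _ _ (Finset.mem_univ i₀),
      ← Finset.sum_erase_add _ (fun i => BB lam - (⌈v i⌉).toNat) (Finset.mem_univ i₀)]
    have hsame : ∑ i ∈ Finset.univ.erase i₀, (BB lam - (⌈w i⌉).toNat)
        = ∑ i ∈ Finset.univ.erase i₀, (BB lam - (⌈v i⌉).toNat) := by
      refine Finset.sum_congr rfl fun i hi => ?_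
      rcases eq_or_ne i j₀ with rfl | hj
      · have h1 : ⌈w j₀⌉ ≤ 0 := Int.ceil_le.mpr (by rw [hwj₀]; push_cast; linarith)
        have h2 : ⌈v j₀⌉ ≤ 0 := Int.ceil_le.mpr (by rw [hvj₀]; push_cast; linarith)
        rw [Int.toNat_of_nonpos h1, Int.toNat_of_nonpos h2]
      · rw [hwk i (Finset.ne_of_mem_erase hi) hj]
    rw [hsame]
    have hceilv : (⌈v i₀⌉).toNat = kc.toNat + 1 := by
      rw [hvi₀, hkc, ceil_hi]
      omega
    have hceilw : (⌈w i₀⌉).toNat = kc.toNat + 2 := by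
      have hx : w i₀ = ((kc + 1 : ℤ):ℚ) + 1/2 := by rw [hwi₀, hkc]; push_cast; ring
      rw [hx, ceil_hi]
      omega
    have hbw : (⌈w i₀⌉).toNat ≤ BB lam := ceil_le_BB hHw hTw i₀
    omega
  exact Relation.ReflTransGen.head hstep
    (IH (phi lam w) (by omega) w rfl hwdec_w hHw (hpcw.trans hpc) hdw hTw)
theorem sum_two_support (h : Fin n → (ℤ → ℤ)) (S : Finset (Fin n)) (i₀ j₀ : Fin n)
    (hne : i₀ ≠ j₀) (hz : ∀ i ∈ S, i ≠ i₀ → i ≠ j₀ → h i = 0) :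
    ∑ i ∈ S, h i = (if i₀ ∈ S then h i₀ else 0) + (if j₀ ∈ S then h j₀ else 0) := by
  classical
  have hsub : S.filter (fun i => i = i₀ ∨ i = j₀) ⊆ S := Finset.filter_subset _ _
  have hz' : ∀ i ∈ S, i ∉ S.filter (fun i => i = i₀ ∨ i = j₀) → h i = 0 := by
    intro i hi hni
    have : ¬ (i = i₀ ∨ i = j₀) := fun hc => hni (Finset.mem_filter.mpr ⟨hi, hc⟩)
    push_neg at this
    exact hz i hi this.1 this.2
  rw [← Finset.sum_subset hsub hz']
  by_cases h0 : i₀ ∈ S <;> by_cases h1 : j₀ ∈ S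
  · have hfe : S.filter (fun i => i = i₀ ∨ i = j₀) = {i₀, j₀} := by
      ext x
      simp only [Finset.mem_filter, Finset.mem_insert, Finset.mem_singleton]
      constructor
      · exact fun hx => hx.2
      · rintro (rfl | rfl)
        · exact ⟨h0, Or.inl rfl⟩
        · exact ⟨h1, Or.inr rfl⟩
    rw [hfe, Finset.sum_pair hne, if_pos h0, if_pos h1]
  · have hfe : S.filter (fun i => i = i₀ ∨ i = j₀) = {i₀} := by
      ext x
      simp only [Finset.mem_filter, Finset.mem_singleton]
      constructor
      · rintro ⟨hx, rfl | rfl⟩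
        · rfl
        · exact absurd hx h1
      · rintro rfl
        exact ⟨h0, Or.inl rfl⟩
    rw [hfe, Finset.sum_singleton, if_pos h0, if_neg h1, add_zero]
  · have hfe : S.filter (fun i => i = i₀ ∨ i = j₀) = {j₀} := by
      ext x
      simp only [Finset.mem_filter, Finset.mem_singleton]
      constructor
      · rintro ⟨hx, rfl | rfl⟩
        · exact absurd hx h0
        · rfl
      · rintro rfl
        exact ⟨h1, Or.inr rfl⟩
    rw [hfe, Finset.sum_singleton, if_neg h0, if_pos h1, zero_add]
  · have hfe : S.filter (fun i => i = i₀ ∨ i = j₀) = ∅ := by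
      rw [Finset.filter_eq_empty_iff]
      rintro x hx (rfl | rfl)
      · exact h0 hx
      · exact h1 hx
    rw [hfe, Finset.sum_empty, if_neg h0, if_neg h1, add_zero]

/-- effect of one PS-step on the natural weights. -/
theorem step_forward {v w : Fin n → ℚ} (h : PSStep v w) (hH : HI v) :
    HI w ∧ pc w = pc v ∧
    (∑ i : Fin n, (if (i:ℕ) < pc v then -(gam (naturalQ w i)) else gam (naturalQ w i)))
      = (∑ i : Fin n, (if (i:ℕ) < pc v then -(gam (naturalQ v i)) else gam (naturalQ v i))) ∧
    ∀ s : Fin n, GCone (wtsA (pc v) (naturalQ w) s - wtsA (pc v) (naturalQ v) s) := by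
  obtain ⟨hv, hw, i₀, j₀, hij, hsum, hwf⟩ := h
  have hijne : i₀ ≠ j₀ := ne_of_lt hij
  obtain ⟨k, hk⟩ := hH i₀
  have hvj : v j₀ = ((-k-1 : ℤ):ℚ) + 1/2 := by
    have : v j₀ = -(v i₀) := by linarith
    rw [this, hk]
    push_cast
    ring
  have hvi_pos : 0 < v i₀ := by
    rcases lt_or_ge 0 (v i₀) with h' | h'
    · exact h'
    · exfalso
      have h1 : v j₀ ≤ v i₀ := hv i₀ j₀ hij.le
      have h2 : v j₀ = -(v i₀) := by linarith
      have : v i₀ = 0 := by linarith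
      exact hi_ne_zero (hH i₀) this
  have hk0 : 0 ≤ k := hi_pos_iff.mp (hk ▸ hvi_pos)
  have hwi₀ : w i₀ = ((k+1 : ℤ):ℚ) + 1/2 := by
    rw [hwf]
    simp only [if_pos rfl, if_neg hijne, hk]
    push_cast
    ring
  have hwj₀ : w j₀ = ((-k-2 : ℤ):ℚ) + 1/2 := by
    rw [hwf]
    simp only [if_pos rfl, if_neg (Ne.symm hijne), hvj]
    push_cast
    ring
  have hwk : ∀ i, i ≠ i₀ → i ≠ j₀ → w i = v i := by
    intro i h1 h2
    rw [hwf]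
    simp only [if_neg h1, if_neg h2]
    ring
  have hHw : HI w := by
    intro i
    rcases eq_or_ne i i₀ with rfl | h1
    · exact ⟨k+1, hwi₀⟩
    rcases eq_or_ne i j₀ with rfl | h2
    · exact ⟨-k-2, hwj₀⟩
    · rw [hwk i h1 h2]; exact hH i
  have hpcw : pc w = pc v := by
    unfold pc
    congr 1
    ext i
    simp only [Finset.mem_filter, Finset.mem_univ, true_and]
    rcases eq_or_ne i i₀ with rfl | h1
    · rw [hwi₀, hk]
      rw [hi_pos_iff, hi_pos_iff]
      omega
    rcases eq_or_ne i j₀ with rfl | h2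
    · rw [hwj₀, hvj]
      rw [hi_pos_iff, hi_pos_iff]
      omega
    · rw [hwk i h1 h2]
  set r : ℤ := -(k+1) with hrdef
  have hnvi : naturalQ v i₀ = r := natq_pos hv hH hk hk0
  have hnvj : naturalQ v j₀ = r := by
    rw [natq_neg hv hH hvj (by omega)]
    omega
  have hnwi : naturalQ w i₀ = r - 1 := by
    rw [natq_pos hw hHw hwi₀ (by omega)]
    omega
  have hnwj : naturalQ w j₀ = r - 1 := by
    rw [natq_neg hw hHw hwj₀ (by omega)]
    omega
  have hnother : ∀ i, i ≠ i₀ → i ≠ j₀ → naturalQ w i = naturalQ v i := by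
    intro i h1 h2
    obtain ⟨ki, hki⟩ := hH i
    have hwi : w i = (ki:ℚ) + 1/2 := by rw [hwk i h1 h2]; exact hki
    rcases le_or_gt 0 ki with hki0 | hki0
    · rw [natq_pos hw hHw hwi hki0, natq_pos hv hH hki hki0]
    · rw [natq_neg hw hHw hwi hki0, natq_neg hv hH hki hki0]
  have hipos : (i₀:ℕ) < pc v := (lt_pc_iff hv hH i₀).mpr hvi_pos
  have hjneg : ¬ (j₀:ℕ) < pc v := by
    intro hc
    have := (lt_pc_iff hv hH j₀).mp hc
    rw [hvj] at this
    rw [hi_pos_iff] at this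
    omega
  -- the difference of the signed terms
  set Fw : Fin n → (ℤ → ℤ) := fun i => if (i:ℕ) < pc v then -(gam (naturalQ w i)) else gam (naturalQ w i) with hFw
  set Fv : Fin n → (ℤ → ℤ) := fun i => if (i:ℕ) < pc v then -(gam (naturalQ v i)) else gam (naturalQ v i) with hFv
  have hdiff0 : ∀ i, i ≠ i₀ → i ≠ j₀ → Fw i - Fv i = 0 := by
    intro i h1 h2
    rw [hFw, hFv]
    simp only [hnother i h1 h2]
    by_cases h : (i:ℕ) < pc v <;> simp [h]
  have hdi : Fw i₀ - Fv i₀ = gam r - gam (r-1) := by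
    rw [hFw, hFv]
    simp only [if_pos hipos, hnwi, hnvi]
    abel
  have hdj : Fw j₀ - Fv j₀ = gam (r-1) - gam r := by
    rw [hFw, hFv]
    simp only [if_neg hjneg, hnwj, hnvj]
  have key : ∀ S : Finset (Fin n), (∑ i ∈ S, Fw i) - (∑ i ∈ S, Fv i)
      = (if i₀ ∈ S then gam r - gam (r-1) else 0) + (if j₀ ∈ S then gam (r-1) - gam r else 0) := by
    intro S
    rw [← Finset.sum_sub_distrib]
    rw [sum_two_support (fun i => Fw i - Fv i) S i₀ j₀ hijne (fun i hi h1 h2 => hdiff0 i h1 h2)]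
    rw [hdi, hdj]
  refine ⟨hHw, hpcw, ?_, ?_⟩
  · have := key Finset.univ
    rw [if_pos (Finset.mem_univ _), if_pos (Finset.mem_univ _)] at this
    have h0 : (∑ i : Fin n, Fw i) - (∑ i : Fin n, Fv i) = 0 := by
      rw [this]; abel
    have := sub_eq_zero.mp h0
    exact this
  · intro s
    have hwts : ∀ (x : Fin n → ℤ), wtsA (pc v) x s
        = ∑ i ∈ Finset.univ.filter (fun i => s ≤ i), (if (i:ℕ) < pc v then -(gam (x i)) else gam (x i)) := by
      intro x
      rfl
    have hkey := key (Finset.univ.filter (fun i => s ≤ i))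
    have heq : wtsA (pc v) (naturalQ w) s - wtsA (pc v) (naturalQ v) s
        = (if i₀ ∈ Finset.univ.filter (fun i => s ≤ i) then gam r - gam (r-1) else 0)
          + (if j₀ ∈ Finset.univ.filter (fun i => s ≤ i) then gam (r-1) - gam r else 0) := by
      rw [hwts, hwts, ← hkey]
    rw [heq]
    by_cases hsi : s ≤ i₀
    · have hsj : s ≤ j₀ := hsi.trans hij.le
      rw [if_pos (Finset.mem_filter.mpr ⟨Finset.mem_univ _, hsi⟩),
        if_pos (Finset.mem_filter.mpr ⟨Finset.mem_univ _, hsj⟩)]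
      have : (gam r - gam (r-1)) + (gam (r-1) - gam r) = 0 := by abel
      rw [this]
      exact gcone_zero
    · by_cases hsj : s ≤ j₀
      · rw [if_neg (fun hc => hsi (Finset.mem_filter.mp hc).2),
          if_pos (Finset.mem_filter.mpr ⟨Finset.mem_univ _, hsj⟩), zero_add]
        have hg := gcone_gen (r-1)
        rw [show r-1+1 = r by ring] at hg
        exact hg
      · rw [if_neg (fun hc => hsi (Finset.mem_filter.mp hc).2),
          if_neg (fun hc => hsj (Finset.mem_filter.mp hc).2), add_zero]
        exact gcone_zero
end PSAux

open PSAux in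
/-- For half-integer dominant weights `λ, μ`, one has `λ ≽ μ` iff `λ♮ ⪰_a μ♮`
(in particular they lie in the same `ℤ^{p|q}`). -/
theorem psle_iff_natural_asucceq {n : ℕ} (lam mu : Fin n → ℚ)
    (hdl : Dom lam) (hdm : Dom mu)
    (hl : ∀ i, ∃ k : ℤ, lam i = (k : ℚ) + 1 / 2)
    (hm : ∀ i, ∃ k : ℤ, mu i = (k : ℚ) + 1 / 2) :
    PSLE mu lam ↔ (pc lam = pc mu ∧ ASucceq (pc lam) (naturalQ lam) (naturalQ mu)) := by
  have hHl : HI lam := hl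
  have hHm : HI mu := hm
  have hwl : WkDec lam := dom_wkdec hdl
  have hwm : WkDec mu := dom_wkdec hdm
  constructor
  · rintro ⟨-, -, hchain⟩
    have main : ∀ x, Relation.ReflTransGen PSStep mu x → HI x ∧ pc x = pc mu ∧
        ((∑ i : Fin n, (if (i:ℕ) < pc mu then -(gam (naturalQ x i)) else gam (naturalQ x i)))
          = (∑ i : Fin n, (if (i:ℕ) < pc mu then -(gam (naturalQ mu i)) else gam (naturalQ mu i)))) ∧
        ∀ s : Fin n, GCone (wtsA (pc mu) (naturalQ x) s - wtsA (pc mu) (naturalQ mu) s) := by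
      intro x hx
      induction hx with
      | refl =>
        exact ⟨hHm, rfl, rfl, fun s => by rw [sub_self]; exact gcone_zero⟩
      | tail hab hbc ih =>
        obtain ⟨hHb, hpcb, hsumb, hconeb⟩ := ih
        obtain ⟨hHc, hpcc, hsumc, hconec⟩ := step_forward hbc hHb
        rw [hpcb] at hsumc hconec hpcc
        exact ⟨hHc, hpcc, hsumc.trans hsumb, fun s => gcone_trans (hconec s) (hconeb s)⟩
    obtain ⟨-, hpcl, hsum, hcone⟩ := main lam hchain
    refine ⟨hpcl, ?_⟩
    unfold ASucceq
    rw [hpcl]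
    exact ⟨hsum, hcone⟩
  · rintro ⟨hpc, hsum, hcone⟩
    have hd0 := dcount_eq hwl hHl hwm hHm hpc hsum
    have hnle := nle_mono hwl hHl hwm hHm hpc hcone
    have hT := tge_mono hd0 hnle
    have hd' : ∀ b : ℚ, 0 < b → mval mu b + mval lam (-b) = mval lam b + mval mu (-b) := by
      intro b hb
      have := hd0 b hb
      omega
    exact ⟨hwm, hwl, reach hwl hHl (phi lam mu) mu rfl hwm hHm hpc.symm hd' hT⟩
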